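/- If (w,H) ∈ S[e] (i.e., (N/2)·λ_max[w⊗w − H] < e), then (1/2)|w|² < e and the operator norm of H is at most 2e(N−1)/N. -/

import Mathlib

/-!
Testing `λ_max[w ⊗ w - H]` on the coordinate vectors bounds the trace `|w|²` by
`N · λ_max[w ⊗ w - H]`. Since `w ⊗ w` is positive semidefinite, `λ_max[-H] ≤ λ_max[w ⊗ w - H]`,
and since `H` is traceless, each eigenvalue of `H` is minus the sum of the other `N - 1`, so
`λ_max[H] ≤ (N - 1) · λ_max[-H]`.
-/

open Matrix BigOperators

/-- The largest eigenvalue of a symmetric matrix, via the variational (Rayleigh) characterization. -/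
noncomputable def lamMax {N : ℕ} (A : Matrix (Fin N) (Fin N) ℝ) : ℝ :=
  sSup {x : ℝ | ∃ ξ : Fin N → ℝ, (∑ i, ξ i ^ 2) = 1 ∧ x = ξ ⬝ᵥ A.mulVec ξ}

/-- The operator norm of a symmetric matrix: the largest absolute value of an eigenvalue. -/
noncomputable def symOpNorm {N : ℕ} (A : Matrix (Fin N) (Fin N) ℝ) : ℝ :=
  max (lamMax A) (lamMax (-A))

theorem dotProduct_self_eq_sum_sq {n R : Type*} [Fintype n] [Semiring R] (v : n → R) :
    v ⬝ᵥ v = ∑ i, v i ^ 2 := by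
  simp only [dotProduct, sq]

namespace Matrix.IsHermitian

variable {n : Type*} [Fintype n] [DecidableEq n] {A : Matrix n n ℝ} (hA : A.IsHermitian) {c : ℝ}
include hA

theorem posSemidef_smul_one_sub (hc : ∀ i, hA.eigenvalues i ≤ c) : (c • 1 - A).PosSemidef := by
  set U : Matrix n n ℝ := (hA.eigenvectorUnitary : Matrix n n ℝ)
  have hA' : A = U * diagonal hA.eigenvalues * star U := by
    simpa [Unitary.conjStarAlgAut_apply] using hA.spectral_theorem
  have hdiag : c • 1 - A = U * diagonal (fun i ↦ c - hA.eigenvalues i) * star U := by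
    rw [show diagonal (fun i ↦ c - hA.eigenvalues i) = c • 1 - diagonal hA.eigenvalues by
      ext i j; by_cases h : i = j <;> simp [diagonal, h]]
    rw [mul_sub, sub_mul, ← hA', mul_smul_comm, mul_one, smul_mul_assoc,
      Unitary.mul_star_self_of_mem hA.eigenvectorUnitary.2]
  rw [hdiag, Unitary.isUnit_coe.posSemidef_star_right_conjugate_iff, posSemidef_diagonal_iff]
  exact fun i ↦ sub_nonneg.mpr (hc i)

theorem dotProduct_mulVec_le (hc : ∀ i, hA.eigenvalues i ≤ c) (x : n → ℝ) :
    x ⬝ᵥ A *ᵥ x ≤ c * (x ⬝ᵥ x) := by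
  have hpsd := (hA.posSemidef_smul_one_sub hc).dotProduct_mulVec_nonneg x
  rw [star_trivial, sub_mulVec, smul_mulVec, one_mulVec, dotProduct_sub, dotProduct_smul,
    smul_eq_mul] at hpsd
  linarith

theorem sum_sq_eigenvectorBasis (i : n) : ∑ j, hA.eigenvectorBasis i j ^ 2 = 1 := by
  rw [← EuclideanSpace.real_norm_sq_eq, hA.eigenvectorBasis.orthonormal.1 i, one_pow]

end Matrix.IsHermitian

section lamMax

variable {N : ℕ}

theorem bddAbove_rayleigh (A : Matrix (Fin N) (Fin N) ℝ) :
    BddAbove {x : ℝ | ∃ ξ : Fin N → ℝ, (∑ i, ξ i ^ 2) = 1 ∧ x = ξ ⬝ᵥ A.mulVec ξ} := by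
  refine ⟨∑ i, ∑ j, |A i j|, ?_⟩
  rintro _ ⟨ξ, hξ, rfl⟩
  have hξ1 : ∀ i, |ξ i| ≤ 1 := fun i ↦ by
    rw [← sq_le_one_iff_abs_le_one, ← hξ]
    exact Finset.single_le_sum (fun j _ ↦ sq_nonneg (ξ j)) (Finset.mem_univ i)
  calc ξ ⬝ᵥ A *ᵥ ξ = ∑ i, ∑ j, ξ i * A i j * ξ j := by
        simp only [dotProduct, mulVec, Finset.mul_sum, mul_assoc]
    _ ≤ ∑ i, ∑ j, |A i j| := by
        gcongr with i _ j _
        calc ξ i * A i j * ξ j ≤ |ξ i * A i j * ξ j| := le_abs_self _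
          _ = |ξ i| * |A i j| * |ξ j| := by rw [abs_mul, abs_mul]
          _ ≤ 1 * |A i j| * 1 := by gcongr <;> exact hξ1 _
          _ = |A i j| := by ring

theorem le_lamMax (A : Matrix (Fin N) (Fin N) ℝ) {ξ : Fin N → ℝ} (hξ : ∑ i, ξ i ^ 2 = 1) :
    ξ ⬝ᵥ A *ᵥ ξ ≤ lamMax A :=
  le_csSup (bddAbove_rayleigh A) ⟨ξ, hξ, rfl⟩

theorem le_lamMax_of_mulVec_eq_smul {A : Matrix (Fin N) (Fin N) ℝ} {v : Fin N → ℝ} {μ : ℝ}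
    (hv : ∑ i, v i ^ 2 = 1) (hAv : A *ᵥ v = μ • v) : μ ≤ lamMax A := by
  have hle := le_lamMax A hv
  rwa [hAv, dotProduct_smul, smul_eq_mul, dotProduct_self_eq_sum_sq, hv, mul_one] at hle

theorem sum_sq_single (i : Fin N) : ∑ j, (Pi.single i 1 : Fin N → ℝ) j ^ 2 = 1 := by
  simp [Pi.single_apply, apply_ite (· ^ 2)]

theorem diag_le_lamMax (A : Matrix (Fin N) (Fin N) ℝ) (i : Fin N) : A i i ≤ lamMax A := by
  simpa using le_lamMax A (sum_sq_single i)

theorem trace_le_mul_lamMax (A : Matrix (Fin N) (Fin N) ℝ) : A.trace ≤ N * lamMax A := by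
  calc A.trace = ∑ i, A i i := rfl
    _ ≤ ∑ _i : Fin N, lamMax A := Finset.sum_le_sum fun i _ ↦ diag_le_lamMax A i
    _ = N * lamMax A := by simp

theorem lamMax_nonneg_of_trace_eq_zero [NeZero N] {A : Matrix (Fin N) (Fin N) ℝ}
    (hA : A.trace = 0) : 0 ≤ lamMax A := by
  have hN : (0 : ℝ) < N := by exact_mod_cast Nat.pos_of_neZero N
  have htrace := trace_le_mul_lamMax A
  rw [hA] at htrace
  exact nonneg_of_mul_nonneg_right htrace hN

theorem lamMax_le [NeZero N] {A : Matrix (Fin N) (Fin N) ℝ} {c : ℝ}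
    (h : ∀ ξ : Fin N → ℝ, ∑ i, ξ i ^ 2 = 1 → ξ ⬝ᵥ A *ᵥ ξ ≤ c) : lamMax A ≤ c := by
  refine csSup_le ⟨_, Pi.single 0 1, sum_sq_single 0, rfl⟩ ?_
  rintro _ ⟨ξ, hξ, rfl⟩
  exact h ξ hξ

theorem lamMax_le_lamMax_add [NeZero N] {P : Matrix (Fin N) (Fin N) ℝ} (hP : P.PosSemidef)
    (A : Matrix (Fin N) (Fin N) ℝ) : lamMax A ≤ lamMax (P + A) :=
  lamMax_le fun ξ hξ ↦ by
    have hPξ := hP.dotProduct_mulVec_nonneg ξ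
    have hle := le_lamMax (P + A) hξ
    rw [star_trivial] at hPξ
    rw [add_mulVec, dotProduct_add] at hle
    linarith

namespace Matrix.IsHermitian

variable [NeZero N] {A : Matrix (Fin N) (Fin N) ℝ} (hA : A.IsHermitian)
include hA

theorem lamMax_le {c : ℝ} (hc : ∀ i, hA.eigenvalues i ≤ c) : lamMax A ≤ c :=
  _root_.lamMax_le fun ξ hξ ↦ by
    have hle := hA.dotProduct_mulVec_le hc ξ
    rwa [dotProduct_self_eq_sum_sq, hξ, mul_one] at hle

theorem lamMax_le_mul_lamMax_neg_of_trace_eq_zero (htr : A.trace = 0) :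
    lamMax A ≤ (N - 1) * lamMax (-A) := by
  refine hA.lamMax_le fun i ↦ ?_
  have hsum : ∑ j, hA.eigenvalues j = 0 := by simpa [hA.trace_eq_sum_eigenvalues] using htr
  have hneg (j : Fin N) : -hA.eigenvalues j ≤ lamMax (-A) :=
    le_lamMax_of_mulVec_eq_smul (hA.sum_sq_eigenvectorBasis j)
      (by rw [neg_mulVec, hA.mulVec_eigenvectorBasis, neg_smul])
  calc hA.eigenvalues i = ∑ j ∈ Finset.univ.erase i, -hA.eigenvalues j := by
        rw [Finset.sum_neg_distrib, eq_neg_iff_add_eq_zero,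
          Finset.add_sum_erase _ _ (Finset.mem_univ i), hsum]
    _ ≤ ∑ _j ∈ Finset.univ.erase i, lamMax (-A) := Finset.sum_le_sum fun j _ ↦ hneg j
    _ = (N - 1) * lamMax (-A) := by
        rw [Finset.sum_const, Finset.card_erase_of_mem (Finset.mem_univ i), nsmul_eq_mul,
          Finset.card_univ, Fintype.card_fin, Nat.cast_pred (Nat.pos_of_neZero N)]

end Matrix.IsHermitian

end lamMax

theorem stmt7_general (N : ℕ) (hN : 2 ≤ N) (e : ℝ) (w : Fin N → ℝ)
    (H : Matrix (Fin N) (Fin N) ℝ) (hsymm : H.IsSymm) (htr : H.trace = 0)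
    (hS : (N : ℝ) / 2 * lamMax (vecMulVec w w - H) < e) :
    1 / 2 * ∑ i, w i ^ 2 < e ∧ symOpNorm H ≤ 2 * e * ((N : ℝ) - 1) / N := by
  have : NeZero N := ⟨by omega⟩
  have hN2 : (2 : ℝ) ≤ N := by exact_mod_cast hN
  have hlam : N * lamMax (vecMulVec w w - H) < 2 * e := by linarith
  have htrace : (vecMulVec w w - H).trace = ∑ i, w i ^ 2 := by
    rw [trace_sub, htr, sub_zero, trace_vecMulVec, dotProduct_self_eq_sum_sq]
  have hneg : lamMax (-H) ≤ lamMax (vecMulVec w w - H) := by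
    simpa [sub_eq_add_neg] using lamMax_le_lamMax_add (posSemidef_vecMulVec_self_star w) (-H)
  have hneg0 : 0 ≤ lamMax (-H) :=
    lamMax_nonneg_of_trace_eq_zero (by rw [trace_neg, htr, neg_zero])
  have hpos : lamMax H ≤ (N - 1) * lamMax (-H) :=
    (isHermitian_iff_isSymm.mpr hsymm).lamMax_le_mul_lamMax_neg_of_trace_eq_zero htr
  refine ⟨by linarith [trace_le_mul_lamMax (vecMulVec w w - H)], ?_⟩
  calc symOpNorm H ≤ (N - 1) * lamMax (-H) :=
        max_le hpos (le_mul_of_one_le_left hneg0 (by linarith))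
    _ ≤ (N - 1) * lamMax (vecMulVec w w - H) := by gcongr; linarith
    _ ≤ (N - 1) * (2 * e / N) := by
        gcongr
        · linarith
        · rw [le_div_iff₀ (by positivity)]; linarith
    _ = 2 * e * (N - 1) / N := by ring

theorem stmt7 (N : ℕ) (hN : 2 ≤ N) (e : ℝ) (he : 0 < e) (w : Fin N → ℝ)
    (H : Matrix (Fin N) (Fin N) ℝ) (hsymm : H.IsSymm) (htr : H.trace = 0)
    (hS : (N : ℝ) / 2 * lamMax (vecMulVec w w - H) < e) :
    1 / 2 * ∑ i, w i ^ 2 < e ∧ symOpNorm H ≤ 2 * e * ((N : ℝ) - 1) / N :=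
  stmt7_general N hN e w H hsymm htr hS
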